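/- If Ψ : Y ⇉ X is an upper hemi-continuous closed-valued multivalued function between metric spaces with X compact, then the function y ↦ diam_m(Ψ(y)) is upper semi-continuous for every m ≥ 2. -/

import Mathlib

open Metric Set

/-- The minimal pairwise distance of an `m`-tuple. -/
noncomputable def Dm {X : Type*} [MetricSpace X] (m : ℕ) (x : Fin m → X) : ℝ :=
  sInf {r : ℝ | ∃ i j : Fin m, i ≠ j ∧ r = dist (x i) (x j)}

/-- The multivariate diameter of a set. -/
noncomputable def diamm {X : Type*} [MetricSpace X] (m : ℕ) (A : Set X) : ℝ :=
  sSup {r : ℝ | ∃ a : Fin m → X, (∀ i, a i ∈ A) ∧ r = Dm m a}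

/-! Moving every point of a tuple by at most `ε` lowers its minimal pairwise distance by at most
`2 ε`. Hence if `Ψ y` lies in the `ε`-thickening of `Ψ y₀`, which by upper hemi-continuity holds
for all `y` near `y₀`, then `diamm m (Ψ y) ≤ diamm m (Ψ y₀) + 2 ε`. -/

section

variable {X : Type*} [MetricSpace X] {m : ℕ}

lemma Dm_nonneg (x : Fin m → X) : 0 ≤ Dm m x :=
  Real.sInf_nonneg (by rintro r ⟨i, j, -, rfl⟩; exact dist_nonneg)

lemma Dm_le_dist (x : Fin m → X) {i j : Fin m} (h : i ≠ j) : Dm m x ≤ dist (x i) (x j) :=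
  csInf_le ⟨0, by rintro r ⟨i, j, -, rfl⟩; exact dist_nonneg⟩ ⟨i, j, h, rfl⟩

lemma fin_zero_ne_one_of_two_le (hm : 2 ≤ m) : (⟨0, by omega⟩ : Fin m) ≠ ⟨1, by omega⟩ := by
  simp [Fin.ext_iff]

lemma Dm_le_Dm_add_of_dist_le (hm : 2 ≤ m) {a b : Fin m → X} {ε : ℝ}
    (h : ∀ i, dist (a i) (b i) ≤ ε) : Dm m a ≤ Dm m b + 2 * ε := by
  rw [← sub_le_iff_le_add]
  refine le_csInf ⟨_, _, _, fin_zero_ne_one_of_two_le hm, rfl⟩ ?_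
  rintro r ⟨i, j, hij, rfl⟩
  rw [sub_le_iff_le_add]
  calc Dm m a ≤ dist (a i) (a j) := Dm_le_dist a hij
    _ ≤ dist (a i) (b i) + dist (b i) (b j) + dist (b j) (a j) := dist_triangle4 _ _ _ _
    _ ≤ ε + dist (b i) (b j) + ε := by
        rw [dist_comm (b j)]
        gcongr <;> exact h _
    _ = dist (b i) (b j) + 2 * ε := by ring

lemma bddAbove_Dm_of_isBounded (hm : 2 ≤ m) {A : Set X} (hA : Bornology.IsBounded A) :
    BddAbove {r : ℝ | ∃ a : Fin m → X, (∀ i, a i ∈ A) ∧ r = Dm m a} := by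
  obtain ⟨C, hC⟩ := isBounded_iff.1 hA
  refine ⟨C, ?_⟩
  rintro r ⟨a, ha, rfl⟩
  exact (Dm_le_dist a (fin_zero_ne_one_of_two_le hm)).trans (hC (ha _) (ha _))

lemma Dm_le_diamm (hm : 2 ≤ m) {A : Set X} (hA : Bornology.IsBounded A) {a : Fin m → X}
    (ha : ∀ i, a i ∈ A) : Dm m a ≤ diamm m A :=
  le_csSup (bddAbove_Dm_of_isBounded hm hA) ⟨a, ha, rfl⟩

lemma diamm_nonneg (A : Set X) : 0 ≤ diamm m A :=
  Real.sSup_nonneg (by rintro r ⟨a, -, rfl⟩; exact Dm_nonneg a)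

lemma diamm_le_add_of_subset_thickening (hm : 2 ≤ m) {A B : Set X} (hA : Bornology.IsBounded A)
    {ε : ℝ} (hε : 0 ≤ ε) (hB : B ⊆ thickening ε A) : diamm m B ≤ diamm m A + 2 * ε := by
  refine Real.sSup_le ?_ (by linarith [diamm_nonneg (m := m) A])
  rintro r ⟨a, ha, rfl⟩
  choose b hbA hab using fun i => mem_thickening_iff.1 (hB (ha i))
  calc Dm m a ≤ Dm m b + 2 * ε := Dm_le_Dm_add_of_dist_le hm fun i => (hab i).le
    _ ≤ diamm m A + 2 * ε := by gcongr; exact Dm_le_diamm hm hA hbA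

end

theorem upperSemicontinuous_diamm_of_upperHemicontinuous_general
    {X Y : Type*} [MetricSpace X] [CompactSpace X] [MetricSpace Y]
    (Ψ : Y → Set X)
    (hhemi : ∀ U : Set X, IsOpen U → IsOpen {y : Y | Ψ y ⊆ U})
    (m : ℕ) (hm : 2 ≤ m) :
    UpperSemicontinuous fun y : Y => diamm m (Ψ y) := by
  intro y₀ c (hc : diamm m (Ψ y₀) < c)
  set ε : ℝ := (c - diamm m (Ψ y₀)) / 3 with hε_def
  have hε : 0 < ε := by linarith
  have hnear : {y | Ψ y ⊆ thickening ε (Ψ y₀)} ∈ nhds y₀ :=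
    (hhemi _ isOpen_thickening).mem_nhds (self_subset_thickening hε _)
  filter_upwards [hnear] with y hy
  calc diamm m (Ψ y) ≤ diamm m (Ψ y₀) + 2 * ε :=
        diamm_le_add_of_subset_thickening hm isBounded_of_compactSpace hε.le hy
    _ < c := by linarith

theorem upperSemicontinuous_diamm_of_upperHemicontinuous
    {X Y : Type*} [MetricSpace X] [CompactSpace X] [MetricSpace Y]
    (Ψ : Y → Set X) (hclosed : ∀ y, IsClosed (Ψ y))
    (hhemi : ∀ U : Set X, IsOpen U → IsOpen {y : Y | Ψ y ⊆ U})
    (m : ℕ) (hm : 2 ≤ m) :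
    UpperSemicontinuous fun y : Y => diamm m (Ψ y) :=
  upperSemicontinuous_diamm_of_upperHemicontinuous_general Ψ hhemi m hm
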